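/- Define Q_m(t) = ∑_{k=0}^m C(m,k) (-1)^k 2^k (1/2 + it)_k / k! for real t, where (s)_k is the Pochhammer symbol. Then for every m, n ≥ 0, (1/4)∫_{-∞}^{∞} conj(Q_m(t)) Q_n(t) dt / cosh(π t)·4 = δ_{mn}; that is, ∫_{-∞}^{∞} conj(Q_m(t)) Q_n(t) / cosh(π t) dt = δ_{mn}, so the Q_m form an orthonormal system in L²(ℝ, dt/cosh(π t)). -/

import Mathlib

open MeasureTheory Real

noncomputable def Q (m : ℕ) (t : ℝ) : ℂ :=
  ∑ k ∈ Finset.range (m + 1),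
    (m.choose k : ℂ) * (-1) ^ k * 2 ^ k *
      (∏ i ∈ Finset.range k, ((1 / 2 + Complex.I * t) + i)) / (k.factorial : ℂ)


open Finset

lemma chooseA (j k : ℕ) : (j + k).choose j = ∑ i ∈ range (j + 1), j.choose i * k.choose i := by
  rw [Nat.add_choose_eq, Finset.Nat.sum_antidiagonal_eq_sum_range_succ_mk]
  rw [← Finset.sum_range_reflect]
  refine Finset.sum_congr rfl fun i hi => ?_
  rw [mem_range, Nat.lt_succ_iff] at hi
  simp only [Nat.succ_sub_one]
  rw [Nat.sub_sub_self hi, Nat.choose_symm hi]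

lemma altA (m i : ℕ) :
    (∑ j ∈ range (m + 1), (-1 : ℤ) ^ j * m.choose j * j.choose i)
      = if i = m then (-1) ^ m else 0 := by
  rcases le_or_gt i m with him | him
  · have h1 : ∑ j ∈ range (m + 1), (-1 : ℤ) ^ j * m.choose j * j.choose i
        = ∑ j ∈ Finset.Ico i (m + 1), (-1 : ℤ) ^ j * m.choose j * j.choose i := by
      rw [Finset.range_eq_Ico]
      refine (Finset.sum_subset (Finset.Ico_subset_Ico (Nat.zero_le _) le_rfl) ?_).symm
      intro j hj hj2
      simp only [Finset.mem_Ico] at hj hj2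
      rw [Nat.choose_eq_zero_of_lt (show j < i by omega)]
      simp
    rw [h1, Finset.sum_Ico_eq_sum_range]
    have h2 : m + 1 - i = (m - i) + 1 := by omega
    rw [h2]
    have h3 : ∀ r ∈ range ((m - i) + 1), (-1 : ℤ) ^ (i + r) * m.choose (i + r) * (i + r).choose i
        = ((-1) ^ i * m.choose i) * ((-1) ^ r * (m - i).choose r) := by
      intro r hr
      rw [mem_range, Nat.lt_succ_iff] at hr
      have hle : i + r ≤ m := by omega
      have h4 := Nat.choose_mul (n := m) (Nat.le_add_right i r)
      rw [Nat.add_sub_cancel_left] at h4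
      have h5 : ((m.choose (i+r) : ℤ)) * ((i + r).choose i) = (m.choose i : ℤ) * ((m - i).choose r) := by
        exact_mod_cast h4
      rw [pow_add]
      linear_combination ((-1:ℤ)^i * (-1)^r) * h5
    rw [Finset.sum_congr rfl h3, ← Finset.mul_sum, Int.alternating_sum_range_choose]
    rcases eq_or_lt_of_le him with h | h
    · simp [h, Nat.sub_self]
    · rw [if_neg (show ¬ m - i = 0 by omega), if_neg (show ¬ i = m by omega)]
      ring
  · have h0 : ∀ j ∈ range (m + 1), (-1 : ℤ) ^ j * m.choose j * j.choose i = 0 := by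
      intro j hj
      rw [mem_range, Nat.lt_succ_iff] at hj
      rw [Nat.choose_eq_zero_of_lt (show j < i by omega)]
      simp
    rw [Finset.sum_eq_zero h0, if_neg (show ¬ i = m by omega)]

lemma combId (m n : ℕ) :
    (∑ j ∈ range (m + 1), ∑ k ∈ range (n + 1),
      (-1 : ℤ) ^ (j + k) * m.choose j * n.choose k * (j + k).choose j)
      = if m = n then 1 else 0 := by
  have expand : ∀ j ∈ range (m+1), ∀ k : ℕ,
      ((j + k).choose j : ℤ) = ∑ i ∈ range (m + 1), (j.choose i : ℤ) * k.choose i := by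
    intro j hj k
    rw [mem_range, Nat.lt_succ_iff] at hj
    have h5 : ((j+k).choose j : ℤ) = ∑ i ∈ range (j + 1), (j.choose i : ℤ) * k.choose i := by
      rw [chooseA]; push_cast; ring
    rw [h5]
    refine Finset.sum_subset (by intro x hx; rw [mem_range] at *; omega) ?_
    intro x hx hx2
    rw [mem_range, Nat.lt_succ_iff] at hx2
    rw [Nat.choose_eq_zero_of_lt (show j < x by omega)]
    push_cast; ring
  calc ∑ j ∈ range (m + 1), ∑ k ∈ range (n + 1),
      (-1 : ℤ) ^ (j + k) * m.choose j * n.choose k * (j + k).choose j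
      = ∑ j ∈ range (m + 1), ∑ i ∈ range (m+1), ∑ k ∈ range (n + 1),
          ((-1:ℤ)^j * m.choose j * j.choose i) * ((-1)^k * n.choose k * k.choose i) := by
        refine Finset.sum_congr rfl fun j hj => ?_
        rw [Finset.sum_comm]
        refine Finset.sum_congr rfl fun k hk => ?_
        rw [expand j hj k, Finset.mul_sum]
        refine Finset.sum_congr rfl fun i hi => ?_
        rw [pow_add]; ring
    _ = ∑ i ∈ range (m+1), (∑ j ∈ range (m + 1), (-1:ℤ)^j * m.choose j * j.choose i)
          * (∑ k ∈ range (n + 1), (-1:ℤ)^k * n.choose k * k.choose i) := by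
        rw [Finset.sum_comm]
        exact Finset.sum_congr rfl fun i _ => (Finset.sum_mul_sum _ _ _ _).symm
    _ = if m = n then 1 else 0 := by
        simp_rw [altA]
        rw [Finset.sum_eq_single m]
        · rcases eq_or_ne m n with h | h
          · subst h
            simp only [if_pos rfl, if_true]
            rw [← pow_add]
            exact Even.neg_one_pow ⟨m, by ring⟩
          · rw [if_pos rfl, if_neg (fun hh : m = n => h hh), if_neg h, mul_zero]
        · intro i hi hne
          rw [if_neg hne, zero_mul]
        · intro h
          exact absurd (Finset.self_mem_range_succ m) h

open Finset Real Complex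

lemma gamma_add_nat (s : ℂ) (hs : 0 < s.re) (k : ℕ) :
    Complex.Gamma (s + k) = (∏ i ∈ Finset.range k, (s + i)) * Complex.Gamma s := by
  induction k with
  | zero => simp
  | succ k ih =>
    have hre : 0 < (s + k).re := by
      simp only [Complex.add_re, Complex.natCast_re]
      positivity
    have hne : s + (k : ℂ) ≠ 0 := fun h => by simp [h] at hre
    have hstep : (s + ((k:ℕ)+1 : ℕ) : ℂ) = (s + k) + 1 := by push_cast; ring
    rw [hstep, Complex.Gamma_add_one _ hne, ih, Finset.prod_range_succ]
    ring

lemma refl_half (t : ℝ) :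
    Complex.Gamma (1/2 + Complex.I*t) * Complex.Gamma (1/2 - Complex.I*t)
      = (π : ℂ) / (Real.cosh (π * t) : ℝ) := by
  have h := Complex.Gamma_mul_Gamma_one_sub (1/2 + Complex.I*t)
  have h1 : (1 : ℂ) - (1/2 + Complex.I*t) = 1/2 - Complex.I*t := by ring
  rw [h1] at h
  rw [h]
  congr 1
  have h2 : (π:ℂ) * (1/2 + Complex.I*t) = π/2 - (-(π*t)*Complex.I) := by push_cast; ring
  rw [h2, Complex.sin_pi_div_two_sub]
  have h3 : (-((π:ℝ)*t) : ℂ) * Complex.I = ((π*t : ℝ) : ℂ) * Complex.I * (-1) := by push_cast; ring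
  rw [h3]
  rw [show ((π*t:ℝ):ℂ) * Complex.I * (-1) = -(((π*t:ℝ):ℂ) * Complex.I) by ring, Complex.cos_neg,
    Complex.cos_mul_I, Complex.ofReal_cosh]

lemma pointwise_beta (j k : ℕ) (t : ℝ) :
    (∏ i ∈ Finset.range j, ((1:ℂ)/2 - Complex.I*t + i)) *
      (∏ i ∈ Finset.range k, ((1:ℂ)/2 + Complex.I*t + i)) / (Real.cosh (π*t) : ℝ)
      = (((j+k).factorial : ℕ) : ℂ) *
        Complex.betaIntegral (1/2 + Complex.I*t + k) (1/2 - Complex.I*t + j) / (π : ℂ) := by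
  have hreP : (0:ℝ) < ((1:ℂ)/2 + Complex.I*t).re := by
    simp [Complex.add_re, Complex.div_re]
  have hreM : (0:ℝ) < ((1:ℂ)/2 - Complex.I*t).re := by
    simp [Complex.sub_re, Complex.div_re]
  have hu : 0 < ((1:ℂ)/2 + Complex.I*t + k).re := by
    simp only [Complex.add_re, Complex.natCast_re]
    positivity
  have hv : 0 < ((1:ℂ)/2 - Complex.I*t + j).re := by
    simp only [Complex.add_re, Complex.natCast_re]
    positivity
  have hbeta := Complex.Gamma_mul_Gamma_eq_betaIntegral hu hv
  have hsum : ((1:ℂ)/2 + Complex.I*t + k) + ((1:ℂ)/2 - Complex.I*t + j)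
      = (((j+k : ℕ)) : ℂ) + 1 := by push_cast; ring
  rw [hsum, Complex.Gamma_nat_eq_factorial] at hbeta
  rw [gamma_add_nat _ hreP k, gamma_add_nat _ hreM j] at hbeta
  have hrefl := refl_half t
  have hcosh : ((Real.cosh (π*t) : ℝ) : ℂ) ≠ 0 := by
    exact_mod_cast (Real.cosh_pos (π*t)).ne'
  have hpi : (π : ℂ) ≠ 0 := by exact_mod_cast Real.pi_ne_zero
  have hrefl2 : Complex.Gamma (1/2 + Complex.I*t) * Complex.Gamma (1/2 - Complex.I*t) *
      ((Real.cosh (π*t) : ℝ) : ℂ) = (π : ℂ) := by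
    rw [hrefl, div_mul_cancel₀ _ hcosh]
  rw [div_eq_div_iff hcosh hpi, ← hbeta]
  linear_combination -((∏ i ∈ Finset.range j, ((1:ℂ)/2 - Complex.I*t + i)) *
    (∏ i ∈ Finset.range k, ((1:ℂ)/2 + Complex.I*t + i))) * hrefl2

open MeasureTheory Real Set

lemma one_sub_pos_of_Ioo {x : ℝ} (hx : x ∈ Ioo (0:ℝ) 1) : 0 < 1 - x := by
  have := hx.2; linarith

lemma beta_subst (c d : ℂ) (N : ℕ) (hcd : c + d = N) :
    ∫ u : ℝ, Complex.exp (c * u) / ((1 + Real.exp u : ℝ) : ℂ) ^ N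
      = Complex.betaIntegral c d := by
  set f : ℝ → ℝ := fun x => Real.log x - Real.log (1 - x) with hf
  set f' : ℝ → ℝ := fun x => x⁻¹ + (1 - x)⁻¹ with hf'
  set g : ℝ → ℂ := fun u => Complex.exp (c * u) / ((1 + Real.exp u : ℝ) : ℂ) ^ N with hg
  have hderiv : ∀ x ∈ Ioo (0:ℝ) 1, HasDerivWithinAt f (f' x) (Ioo 0 1) x := by
    intro x hx
    have hx0 : x ≠ 0 := ne_of_gt hx.1
    have h1x : (1:ℝ) - x ≠ 0 := ne_of_gt (one_sub_pos_of_Ioo hx)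
    have d1 : HasDerivAt (fun y : ℝ => Real.log y) x⁻¹ x := Real.hasDerivAt_log hx0
    have d2 : HasDerivAt (fun y : ℝ => (1:ℝ) - y) (-1) x := by
      simpa using (hasDerivAt_id x).const_sub 1
    have d3 : HasDerivAt (fun y : ℝ => Real.log (1 - y)) ((1-x)⁻¹ * (-1)) x :=
      (Real.hasDerivAt_log h1x).comp x d2
    have d4 : HasDerivAt f (x⁻¹ - (1-x)⁻¹ * (-1)) x := d1.sub d3
    have : x⁻¹ - (1-x)⁻¹ * (-1) = f' x := by rw [hf']; ring
    rw [this] at d4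
    exact d4.hasDerivWithinAt
  have hmono : StrictMonoOn f (Ioo (0:ℝ) 1) := by
    intro x hx y hy hxy
    have h1 : Real.log x < Real.log y := Real.log_lt_log hx.1 hxy
    have h2 : Real.log (1 - y) < Real.log (1 - x) :=
      Real.log_lt_log (one_sub_pos_of_Ioo hy) (by linarith)
    simp only [hf]
    linarith
  have hinj : InjOn f (Ioo (0:ℝ) 1) := hmono.injOn
  have himg : f '' (Ioo (0:ℝ) 1) = univ := by
    apply Set.eq_univ_of_forall
    intro y
    refine ⟨(1 + Real.exp (-y))⁻¹, ⟨by positivity, ?_⟩, ?_⟩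
    · rw [inv_lt_one_iff₀]
      right
      have := Real.exp_pos (-y)
      linarith
    · set x : ℝ := (1 + Real.exp (-y))⁻¹ with hxdef
      have hxpos : 0 < x := by positivity
      have hden : (0:ℝ) < 1 + Real.exp (-y) := by positivity
      have h1x : 1 - x = Real.exp (-y) * x := by
        rw [hxdef]
        field_simp
        ring
      simp only [hf]
      rw [h1x, Real.log_mul (Real.exp_ne_zero _) (ne_of_gt hxpos), Real.log_exp]
      ring
  have himg2 := integral_image_eq_integral_abs_deriv_smul measurableSet_Ioo hderiv hinj g
  rw [himg, MeasureTheory.setIntegral_univ] at himg2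
  rw [hg] at himg2
  rw [himg2, Complex.betaIntegral, intervalIntegral.integral_of_le (by norm_num : (0:ℝ) ≤ 1),
    MeasureTheory.integral_Ioc_eq_integral_Ioo]
  apply MeasureTheory.setIntegral_congr_fun measurableSet_Ioo
  intro x hx
  simp only []
  symm
  have hx0 : (0:ℝ) < x := hx.1
  have h1x : (0:ℝ) < 1 - x := one_sub_pos_of_Ioo hx
  set a : ℝ := Real.log x with ha
  set b : ℝ := Real.log (1 - x) with hb
  have hxa : (x:ℂ) = Complex.exp a := by
    rw [ha, ← Complex.ofReal_exp, Real.exp_log hx0]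
  have hxb : (1:ℂ) - x = Complex.exp b := by
    rw [hb, ← Complex.ofReal_exp, Real.exp_log h1x]
    push_cast; ring
  have hfx : f x = a - b := rfl
  have hexp : Real.exp (f x) = x / (1 - x) := by
    rw [hfx, Real.exp_sub, ha, hb, Real.exp_log hx0, Real.exp_log h1x]
  have hden : (1 : ℝ) + Real.exp (f x) = (1 - x)⁻¹ := by
    rw [hexp]; field_simp; ring
  have hfp : f' x = (x * (1-x))⁻¹ := by
    rw [hf']
    field_simp
    ring
  have habs : |f' x| = (x * (1-x))⁻¹ := by
    rw [hfp, abs_of_pos (by positivity)]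
  -- now compute
  have hlogexp : ∀ r : ℝ, Complex.log (Complex.exp (r:ℂ)) = (r:ℂ) := fun r =>
    Complex.log_exp (by simp [Real.pi_pos]) (by simp [Real.pi_pos.le])
  have cpow1 : (x:ℂ) ^ (c - 1) = Complex.exp ((a:ℂ) * (c - 1)) := by
    rw [hxa, Complex.cpow_def_of_ne_zero (Complex.exp_ne_zero _), hlogexp]
  have cpow2 : ((1:ℂ) - x) ^ (d - 1) = Complex.exp ((b:ℂ) * (d - 1)) := by
    rw [hxb, Complex.cpow_def_of_ne_zero (Complex.exp_ne_zero _), hlogexp]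
  have e1 : ((1 + Real.exp (f x) : ℝ) : ℂ) ^ N = Complex.exp ((N:ℂ) * (-(b:ℂ))) := by
    rw [hden]
    have h5 : (((1 - x)⁻¹ : ℝ) : ℂ) = Complex.exp (-(b:ℂ)) := by
      push_cast
      rw [hxb, ← Complex.exp_neg]
    rw [h5, ← Complex.exp_nat_mul]
  have e2 : (((x * (1-x))⁻¹ : ℝ) : ℂ) = Complex.exp (-(a:ℂ) - b) := by
    push_cast
    rw [mul_inv, show ((x:ℂ))⁻¹ = Complex.exp (-(a:ℂ)) from by rw [hxa, ← Complex.exp_neg],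
      show ((1:ℂ) - x)⁻¹ = Complex.exp (-(b:ℂ)) from by rw [hxb, ← Complex.exp_neg],
      ← Complex.exp_add]
    ring_nf
  have e3 : c * ((f x : ℝ) : ℂ) = c * ((a:ℂ) - b) := by
    rw [hfx]; push_cast; ring
  calc (x:ℂ) ^ (c-1) * ((1:ℂ) - x) ^ (d-1)
      = Complex.exp ((a:ℂ)*(c-1) + (b:ℂ)*(d-1)) := by rw [cpow1, cpow2, Complex.exp_add]
    _ = |f' x| • g (f x) := by
        rw [habs, hg]
        show Complex.exp ((a:ℂ)*(c-1) + (b:ℂ)*(d-1))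
          = (((x * (1-x))⁻¹ : ℝ)) • (Complex.exp (c * ((f x : ℝ):ℂ)) / ((1 + Real.exp (f x) : ℝ) : ℂ) ^ N)
        rw [Complex.real_smul, e2, e1, e3, ← Complex.exp_sub, ← Complex.exp_add]
        congr 1
        linear_combination (b:ℂ) * hcd
open MeasureTheory Real Set Finset FourierTransform

open MeasureTheory Real Set Finset

noncomputable def Pp (k : ℕ) (t : ℝ) : ℂ := ∏ i ∈ Finset.range k, (1/2 + Complex.I*t + i)
noncomputable def Pm (j : ℕ) (t : ℝ) : ℂ := ∏ i ∈ Finset.range j, (1/2 - Complex.I*t + i)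

lemma integrable_exp_neg_abs {a : ℝ} (ha : 0 < a) :
    Integrable (fun u : ℝ => Real.exp (-(a * |u|))) := by
  have hIoi : IntegrableOn (fun u : ℝ => Real.exp (-(a * |u|))) (Ioi 0) := by
    refine (exp_neg_integrableOn_Ioi 0 ha).congr_fun (fun x hx => ?_) measurableSet_Ioi
    rw [abs_of_pos hx]; simp only [neg_mul]
  have hIic : IntegrableOn (fun u : ℝ => Real.exp (-(a * |u|))) (Iic 0) := by
    rw [← Measure.map_neg_eq_self (volume : Measure ℝ)]
    have m : MeasurableEmbedding fun x : ℝ => -x := (Homeomorph.neg ℝ).measurableEmbedding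
    rw [m.integrableOn_map_iff]
    simp_rw [Function.comp_def, abs_neg, neg_preimage, neg_Iic, neg_zero]
    exact (integrableOn_Ici_iff_integrableOn_Ioi).mpr hIoi
  rw [← integrableOn_univ, ← Set.Iic_union_Ioi (a := (0:ℝ))]
  exact hIic.union hIoi

lemma prod_bound (k : ℕ) (z : ℂ) (t : ℝ) (hz : ‖z‖ ≤ |t|) :
    ‖∏ i ∈ Finset.range k, ((1:ℂ)/2 + z + i)‖ ≤ (k.factorial : ℝ) * (1+|t|)^k := by
  rw [norm_prod]
  have step : ∀ i ∈ Finset.range k, ‖(1:ℂ)/2 + z + i‖ ≤ (1 + (i:ℝ)) * (1 + |t|) := by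
    intro i _
    have h1 : ‖(1:ℂ)/2 + z + i‖ ≤ ‖(1:ℂ)/2 + i‖ + ‖z‖ := by
      have : (1:ℂ)/2 + z + i = ((1:ℂ)/2 + i) + z := by ring
      rw [this]
      exact norm_add_le _ _
    have h2 : ‖(1:ℂ)/2 + (i:ℂ)‖ = 1/2 + (i:ℝ) := by
      rw [show (1:ℂ)/2 + (i:ℂ) = (((1:ℝ)/2 + (i:ℝ) : ℝ) : ℂ) by push_cast; ring,
        Complex.norm_real]
      rw [Real.norm_eq_abs, abs_of_pos (by positivity)]
    have h3 : (0:ℝ) ≤ i := Nat.cast_nonneg i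
    have h4 : (0:ℝ) ≤ |t| := abs_nonneg t
    nlinarith [h1, h2, hz]
  calc ∏ i ∈ Finset.range k, ‖(1:ℂ)/2 + z + i‖
      ≤ ∏ i ∈ Finset.range k, (1 + (i:ℝ)) * (1 + |t|) :=
        Finset.prod_le_prod (fun i _ => norm_nonneg _) step
    _ = (∏ i ∈ Finset.range k, (1 + (i:ℝ))) * (1+|t|)^k := by
        rw [Finset.prod_mul_distrib, Finset.prod_const, Finset.card_range]
    _ = (k.factorial : ℝ) * (1+|t|)^k := by
        congr 1
        rw [← Finset.prod_range_add_one_eq_factorial]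
        push_cast
        exact Finset.prod_congr rfl fun i _ => by ring
lemma cosh_lower (x : ℝ) : Real.exp |x| ≤ 2 * Real.cosh x := by
  rw [Real.cosh_eq]
  rcases abs_cases x with ⟨h, _⟩ | ⟨h, _⟩ <;> rw [h] <;>
    nlinarith [Real.exp_pos x, Real.exp_pos (-x)]

lemma one_add_le_pow (M : ℕ) : ∃ C : ℝ, 0 ≤ C ∧
    ∀ t : ℝ, (1+|t|)^M ≤ C * Real.exp (π/2 * |t|) := by
  set ε : ℝ := min 1 ((π/2)/(M+1)) with hε
  have hεpos : 0 < ε := by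
    apply lt_min one_pos
    positivity
  have hε1 : ε ≤ 1 := min_le_left _ _
  refine ⟨ε⁻¹^M, by positivity, fun t => ?_⟩
  have habs : (0:ℝ) ≤ |t| := abs_nonneg t
  have h1 : 1 + |t| ≤ ε⁻¹ * Real.exp (ε * |t|) := by
    have h2 : ε*|t| + 1 ≤ Real.exp (ε*|t|) := Real.add_one_le_exp _
    have h3 : 1 + |t| ≤ ε⁻¹ * (ε*|t| + 1) := by
      have h4 : (1:ℝ) ≤ ε⁻¹ := one_le_inv_iff₀.mpr ⟨hεpos, hε1⟩
      have h5 : ε⁻¹ * (ε*|t|+1) = |t| + ε⁻¹ := by rw [mul_add, inv_mul_cancel_left₀ hεpos.ne', mul_one]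
      rw [h5]
      linarith
    calc 1 + |t| ≤ ε⁻¹ * (ε*|t| + 1) := h3
      _ ≤ ε⁻¹ * Real.exp (ε*|t|) := by
          apply mul_le_mul_of_nonneg_left h2 (by positivity)
  calc (1+|t|)^M ≤ (ε⁻¹ * Real.exp (ε * |t|))^M :=
        pow_le_pow_left₀ (by positivity) h1 M
    _ = ε⁻¹^M * Real.exp (ε*|t|)^M := mul_pow _ _ _
    _ = ε⁻¹^M * Real.exp ((M:ℝ) * (ε*|t|)) := by rw [← Real.exp_nat_mul]
    _ ≤ ε⁻¹^M * Real.exp (π/2 * |t|) := by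
        apply mul_le_mul_of_nonneg_left _ (by positivity)
        apply Real.exp_le_exp.mpr
        have h6 : ε ≤ (π/2)/(M+1) := min_le_right _ _
        have h7 : (M:ℝ) ≤ M+1 := by linarith
        have h8 : (M:ℝ) * ε ≤ π/2 := by
          rcases Nat.eq_zero_or_pos M with hM | hM
          · simp [hM]; positivity
          · calc (M:ℝ) * ε ≤ (M:ℝ) * ((π/2)/(M+1)) :=
                mul_le_mul_of_nonneg_left h6 (Nat.cast_nonneg M)
              _ = (π/2) * ((M:ℝ)/((M:ℝ)+1)) := by ring
              _ ≤ (π/2) * 1 := by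
                  apply mul_le_mul_of_nonneg_left _ (by positivity)
                  rw [div_le_one (by positivity)]
                  linarith
              _ = π/2 := mul_one _
        nlinarith [habs, h8, mul_le_mul_of_nonneg_right h8 habs]
lemma G_cont (j k : ℕ) : Continuous fun t : ℝ => Pm j t * Pp k t / (Real.cosh (π*t) : ℂ) := by
  apply Continuous.div
  · apply Continuous.mul
    · unfold Pm; apply continuous_finset_prod
      intro i _
      continuity
    · unfold Pp; apply continuous_finset_prod
      intro i _
      continuity
  · continuity
  · intro t
    exact_mod_cast (Real.cosh_pos (π*t)).ne'

lemma G_bound (j k : ℕ) : ∃ C : ℝ, 0 ≤ C ∧ ∀ t : ℝ,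
    ‖Pm j t * Pp k t / (Real.cosh (π*t) : ℂ)‖ ≤ C * Real.exp (-(π/2 * |t|)) := by
  obtain ⟨C0, hC0, hC⟩ := one_add_le_pow (j+k)
  refine ⟨(j.factorial : ℝ) * k.factorial * C0 * 2, by positivity, fun t => ?_⟩
  have hcosh : (0:ℝ) < Real.cosh (π*t) := Real.cosh_pos _
  have hnorm : ‖Pm j t * Pp k t / (Real.cosh (π*t) : ℂ)‖
      = ‖Pm j t‖ * ‖Pp k t‖ / Real.cosh (π*t) := by
    rw [norm_div, norm_mul, Complex.norm_real, Real.norm_eq_abs, abs_of_pos hcosh]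
  rw [hnorm]
  have hPm : ‖Pm j t‖ ≤ (j.factorial : ℝ) * (1+|t|)^j := by
    have := prod_bound j (-(Complex.I*t)) t (by simp)
    simpa [Pm, sub_eq_add_neg] using this
  have hPp : ‖Pp k t‖ ≤ (k.factorial : ℝ) * (1+|t|)^k := by
    have := prod_bound k (Complex.I*t) t (by simp)
    simpa [Pp] using this
  have hprod : ‖Pm j t‖ * ‖Pp k t‖ ≤ (j.factorial : ℝ) * k.factorial * (1+|t|)^(j+k) := by
    calc ‖Pm j t‖ * ‖Pp k t‖ ≤ ((j.factorial : ℝ) * (1+|t|)^j) * ((k.factorial : ℝ) * (1+|t|)^k) :=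
          mul_le_mul hPm hPp (norm_nonneg _) (by positivity)
      _ = (j.factorial : ℝ) * k.factorial * (1+|t|)^(j+k) := by rw [pow_add]; ring
  have hcosh2 : (Real.cosh (π*t))⁻¹ ≤ 2 * Real.exp (-(π * |t|)) := by
    have h1 : Real.exp (π * |t|) ≤ 2 * Real.cosh (π*t) := by
      have h0 := cosh_lower (π*t)
      rwa [abs_mul, abs_of_pos Real.pi_pos] at h0
    have h2 : (2 * Real.cosh (π*t))⁻¹ ≤ (Real.exp (π*|t|))⁻¹ :=
      inv_anti₀ (Real.exp_pos _) h1
    have h3 : (Real.cosh (π*t))⁻¹ = 2 * (2 * Real.cosh (π*t))⁻¹ := by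
      field_simp
    rw [h3, Real.exp_neg]
    linarith
  have hexp0 : (0:ℝ) < Real.exp (π/2*|t|) := Real.exp_pos _
  calc ‖Pm j t‖ * ‖Pp k t‖ / Real.cosh (π*t)
      = (‖Pm j t‖ * ‖Pp k t‖) * (Real.cosh (π*t))⁻¹ := by rw [div_eq_mul_inv]
    _ ≤ ((j.factorial : ℝ) * k.factorial * (1+|t|)^(j+k)) * (2 * Real.exp (-(π*|t|))) := by
        apply mul_le_mul hprod hcosh2 (by positivity) (by positivity)
    _ ≤ ((j.factorial : ℝ) * k.factorial * (C0 * Real.exp (π/2*|t|))) * (2 * Real.exp (-(π*|t|))) := by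
        apply mul_le_mul_of_nonneg_right _ (by positivity)
        apply mul_le_mul_of_nonneg_left (hC t) (by positivity)
    _ = ((j.factorial : ℝ) * k.factorial * C0 * 2) * (Real.exp (π/2*|t|) * Real.exp (-(π*|t|))) := by
        ring
    _ = ((j.factorial : ℝ) * k.factorial * C0 * 2) * Real.exp (-(π/2 * |t|)) := by
        rw [← Real.exp_add]
        ring_nf

open MeasureTheory Real Set Finset FourierTransform

noncomputable def Bint (j k : ℕ) (t : ℝ) : ℂ :=
  Complex.betaIntegral (1/2 + Complex.I*t + k) (1/2 - Complex.I*t + j)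

noncomputable def hfun (j k : ℕ) : ℝ → ℂ :=
  fun u => Complex.exp (((1/2 + k) * u : ℝ)) / ((1 + Real.exp u : ℝ) : ℂ)^(j+k+1)

lemma pointwise_beta' (j k : ℕ) (t : ℝ) :
    Pm j t * Pp k t / (Real.cosh (π*t) : ℝ)
      = (((j+k).factorial : ℕ) : ℂ) * Bint j k t / (π : ℂ) :=
  pointwise_beta j k t

lemma hfun_cont (j k : ℕ) : Continuous (hfun j k) := by
  unfold hfun
  apply Continuous.div
  · exact Complex.continuous_exp.comp (Complex.continuous_ofReal.comp (by continuity))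
  · apply Continuous.pow
    exact Complex.continuous_ofReal.comp (by continuity)
  · intro u
    apply pow_ne_zero
    exact_mod_cast (by positivity : (0:ℝ) < 1 + Real.exp u).ne'

lemma hfun_norm_le (j k : ℕ) (u : ℝ) : ‖hfun j k u‖ ≤ Real.exp (-(1/2 * |u|)) := by
  have hd0 : (0:ℝ) < 1 + Real.exp u := by positivity
  have hnorm : ‖hfun j k u‖ = Real.exp ((1/2 + k) * u) / (1 + Real.exp u)^(j+k+1) := by
    unfold hfun
    rw [norm_div, norm_pow, Complex.norm_real, Real.norm_eq_abs, abs_of_pos hd0]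
    congr 1
    rw [Complex.norm_exp_ofReal]
  rw [hnorm, div_le_iff₀ (by positivity)]
  rcases le_or_gt 0 u with hu | hu
  · rw [_root_.abs_of_nonneg hu]
    calc Real.exp ((1/2 + k) * u)
        ≤ Real.exp (-(1/2 * u)) * Real.exp u ^ (j+k+1) := by
          rw [← Real.exp_nat_mul, ← Real.exp_add]
          apply Real.exp_le_exp.mpr
          push_cast
          nlinarith [hu]
      _ ≤ Real.exp (-(1/2 * u)) * (1 + Real.exp u)^(j+k+1) := by
          apply mul_le_mul_of_nonneg_left _ (Real.exp_pos _).le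
          apply pow_le_pow_left₀ (Real.exp_pos _).le (by linarith)
  · rw [_root_.abs_of_neg hu]
    calc Real.exp ((1/2 + k) * u)
        ≤ Real.exp (-(1/2 * -u)) * 1 := by
          rw [mul_one]
          apply Real.exp_le_exp.mpr
          have : (0:ℝ) ≤ k := Nat.cast_nonneg k
          nlinarith [hu]
      _ ≤ Real.exp (-(1/2 * -u)) * (1 + Real.exp u)^(j+k+1) := by
          apply mul_le_mul_of_nonneg_left _ (Real.exp_pos _).le
          apply one_le_pow₀
          nlinarith [Real.exp_pos u]

lemma hfun_integrable (j k : ℕ) : Integrable (hfun j k) := by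
  apply Integrable.mono' (integrable_exp_neg_abs (by norm_num : (0:ℝ) < 1/2))
    (hfun_cont j k).aestronglyMeasurable
  exact Filter.Eventually.of_forall (hfun_norm_le j k)

lemma fourier_hfun (j k : ℕ) (ξ : ℝ) : 𝓕 (hfun j k) ξ = Bint j k (-(2*π*ξ)) := by
  rw [Real.fourier_eq']
  have hcd : ((1:ℂ)/2 + Complex.I*((-(2*π*ξ):ℝ):ℂ) + k) + ((1:ℂ)/2 - Complex.I*((-(2*π*ξ):ℝ):ℂ) + j)
      = ((j+k+1 : ℕ) : ℂ) := by push_cast; ring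
  have hsub := beta_subst (1/2 + Complex.I*((-(2*π*ξ):ℝ):ℂ) + k)
    (1/2 - Complex.I*((-(2*π*ξ):ℝ):ℂ) + j) (j+k+1) hcd
  rw [show Bint j k (-(2*π*ξ)) = Complex.betaIntegral (1/2 + Complex.I*((-(2*π*ξ):ℝ):ℂ) + k)
    (1/2 - Complex.I*((-(2*π*ξ):ℝ):ℂ) + j) from rfl, ← hsub]
  refine MeasureTheory.integral_congr_ae (Filter.Eventually.of_forall fun v => ?_)
  simp only []
  have hinner : (inner ℝ v ξ : ℝ) = v * ξ := by rw [RCLike.inner_apply, conj_trivial, mul_comm]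
  rw [hinner, smul_eq_mul]
  unfold hfun
  rw [mul_div_assoc']
  congr 1
  rw [← Complex.exp_add]
  congr 1
  push_cast
  ring
lemma Bint_eq (j k : ℕ) (t : ℝ) :
    Bint j k t = (π:ℂ)/(((j+k).factorial : ℕ):ℂ) * (Pm j t * Pp k t / ((Real.cosh (π*t):ℝ):ℂ)) := by
  have hfac : (((j+k).factorial : ℕ) : ℂ) ≠ 0 := Nat.cast_ne_zero.mpr (Nat.factorial_ne_zero _)
  have hpi : (π:ℂ) ≠ 0 := Complex.ofReal_ne_zero.mpr Real.pi_ne_zero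
  rw [pointwise_beta' j k t]
  field_simp

lemma Bint_bound (j k : ℕ) : ∃ C : ℝ, 0 ≤ C ∧ ∀ t : ℝ,
    ‖Bint j k t‖ ≤ C * Real.exp (-(π/2 * |t|)) := by
  obtain ⟨C, hC0, hC⟩ := G_bound j k
  refine ⟨π / ((j+k).factorial : ℝ) * C, by positivity, fun t => ?_⟩
  rw [Bint_eq j k t, norm_mul]
  have h1 : ‖(π:ℂ)/(((j+k).factorial : ℕ):ℂ)‖ = π / ((j+k).factorial : ℝ) := by
    rw [norm_div, Complex.norm_real, Real.norm_eq_abs, _root_.abs_of_pos Real.pi_pos,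
      Complex.norm_natCast]
  rw [h1, mul_assoc]
  apply mul_le_mul_of_nonneg_left (hC t) (by positivity)

lemma F_int (j k : ℕ) : Integrable (𝓕 (hfun j k)) := by
  obtain ⟨C, hC0, hC⟩ := Bint_bound j k
  have hcont : Continuous (𝓕 (hfun j k)) :=
    VectorFourier.fourierIntegral_continuous Real.continuous_fourierChar
      (by exact continuous_inner) (hfun_integrable j k)
  apply Integrable.mono'
    ((integrable_exp_neg_abs (show (0:ℝ) < π*π by positivity)).const_mul C)
    hcont.aestronglyMeasurable
  refine Filter.Eventually.of_forall fun ξ => ?_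
  rw [fourier_hfun]
  calc ‖Bint j k (-(2*π*ξ))‖ ≤ C * Real.exp (-(π/2 * |(-(2*π*ξ))|)) := hC _
    _ = C * Real.exp (-(π*π*|ξ|)) := by
        congr 2
        rw [abs_neg, abs_mul, abs_mul, _root_.abs_of_pos Real.pi_pos,
          show |(2:ℝ)| = 2 from by norm_num]
        ring

lemma int_Bint (j k : ℕ) : ∫ t : ℝ, Bint j k t = 2*(π:ℂ)/2^(j+k+1) := by
  have hinv := (hfun_integrable j k).fourierInv_fourier_eq (F_int j k) ((hfun_cont j k).continuousAt (x := 0))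
  have h0 : hfun j k 0 = (2^(j+k+1) : ℂ)⁻¹ := by
    unfold hfun
    norm_num
  have hL : 𝓕⁻ (𝓕 (hfun j k)) 0 = ∫ ξ : ℝ, 𝓕 (hfun j k) ξ := by
    rw [Real.fourierInv_eq]
    refine MeasureTheory.integral_congr_ae (Filter.Eventually.of_forall fun v => ?_)
    simp
  have hF : ∫ ξ : ℝ, 𝓕 (hfun j k) ξ = ∫ ξ : ℝ, Bint j k ((-(2*π)) * ξ) := by
    refine MeasureTheory.integral_congr_ae (Filter.Eventually.of_forall fun ξ => ?_)
    rw [fourier_hfun]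
    congr 1
    ring
  have hs := MeasureTheory.Measure.integral_comp_mul_left (Bint j k) (-(2*π))
  have habs : |(-(2*π))⁻¹| = (2*π)⁻¹ := by
    rw [abs_inv, abs_neg, abs_mul, _root_.abs_of_pos Real.pi_pos,
      show |(2:ℝ)| = 2 from by norm_num]
  have hkey : ((2*π)⁻¹ : ℝ) • (∫ t : ℝ, Bint j k t) = (2^(j+k+1) : ℂ)⁻¹ := by
    rw [← habs, ← hs, ← hF, ← hL, hinv, h0]
  have h2π : ((2*π : ℝ) : ℂ) ≠ 0 := by
    apply Complex.ofReal_ne_zero.mpr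
    positivity
  have hmain : (∫ t : ℝ, Bint j k t) = ((2*π:ℝ):ℂ) * (2^(j+k+1):ℂ)⁻¹ := by
    rw [← hkey, Complex.real_smul, Complex.ofReal_inv, mul_inv_cancel_left₀ h2π]
  rw [hmain]
  push_cast
  ring

lemma G_integrable (j k : ℕ) :
    Integrable (fun t : ℝ => Pm j t * Pp k t / ((Real.cosh (π*t):ℝ):ℂ)) := by
  obtain ⟨C, hC0, hC⟩ := G_bound j k
  exact Integrable.mono'
    ((integrable_exp_neg_abs (show (0:ℝ) < π/2 by positivity)).const_mul C)
    (G_cont j k).aestronglyMeasurable (Filter.Eventually.of_forall hC)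

lemma int_G (j k : ℕ) :
    ∫ t : ℝ, Pm j t * Pp k t / ((Real.cosh (π*t):ℝ):ℂ)
      = (((j+k).factorial : ℕ) : ℂ) / 2^(j+k) := by
  have h1 : ∀ t:ℝ, Pm j t * Pp k t / ((Real.cosh (π*t):ℝ):ℂ)
      = (((j+k).factorial:ℕ):ℂ)/(π:ℂ) * Bint j k t := fun t => by
    rw [pointwise_beta' j k t]; ring
  rw [MeasureTheory.integral_congr_ae (Filter.Eventually.of_forall h1),
    MeasureTheory.integral_const_mul, int_Bint]
  have hpi : (π:ℂ) ≠ 0 := Complex.ofReal_ne_zero.mpr Real.pi_ne_zero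
  field_simp
  ring

theorem stmt_14 (m n : ℕ) :
    ∫ t : ℝ, (starRingEnd ℂ) (Q m t) * Q n t / (Real.cosh (π * t) : ℂ) =
      if m = n then 1 else 0 := by
  have hQ : ∀ t : ℝ, Q n t = ∑ k ∈ Finset.range (n+1),
      ((n.choose k : ℂ) * (-1)^k * 2^k / (k.factorial : ℂ)) * Pp k t := by
    intro t
    unfold Q Pp
    exact Finset.sum_congr rfl fun k _ => by ring
  have hconjQ : ∀ t : ℝ, (starRingEnd ℂ) (Q m t) = ∑ j ∈ Finset.range (m+1),
      ((m.choose j : ℂ) * (-1)^j * 2^j / (j.factorial : ℂ)) * Pm j t := by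
    intro t
    unfold Q Pm
    rw [map_sum]
    refine Finset.sum_congr rfl fun j _ => ?_
    simp only [map_div₀, map_mul, map_pow, map_prod]
    have hp : ∀ i ∈ Finset.range j, (starRingEnd ℂ) ((1/2 + Complex.I * t) + i)
        = 1/2 - Complex.I * t + i := by
      intro i _
      simp only [map_add, map_div₀, map_one, map_mul, Complex.conj_I, Complex.conj_ofReal,
        map_ofNat, map_natCast]
      ring
    rw [Finset.prod_congr rfl hp]
    simp only [map_natCast, map_neg, map_one, map_ofNat]
    ring
  have hpoint : ∀ t : ℝ, (starRingEnd ℂ) (Q m t) * Q n t / (Real.cosh (π * t) : ℂ)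
      = ∑ j ∈ Finset.range (m+1), ∑ k ∈ Finset.range (n+1),
        (((m.choose j : ℂ) * (-1)^j * 2^j / (j.factorial : ℂ)) *
         ((n.choose k : ℂ) * (-1)^k * 2^k / (k.factorial : ℂ))) *
          (Pm j t * Pp k t / ((Real.cosh (π*t) : ℝ) : ℂ)) := by
    intro t
    rw [hconjQ t, hQ t, Finset.sum_mul_sum, Finset.sum_div]
    refine Finset.sum_congr rfl fun j _ => ?_
    rw [Finset.sum_div]
    exact Finset.sum_congr rfl fun k _ => by ring
  rw [MeasureTheory.integral_congr_ae (Filter.Eventually.of_forall hpoint)]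
  rw [MeasureTheory.integral_finset_sum _ (fun j _ => MeasureTheory.integrable_finset_sum _
    (fun k _ => (G_integrable j k).const_mul _))]
  have hswap : ∀ j ∈ Finset.range (m+1),
      (∫ t : ℝ, ∑ k ∈ Finset.range (n+1),
        (((m.choose j : ℂ) * (-1)^j * 2^j / (j.factorial : ℂ)) *
         ((n.choose k : ℂ) * (-1)^k * 2^k / (k.factorial : ℂ))) *
          (Pm j t * Pp k t / ((Real.cosh (π*t) : ℝ) : ℂ)))
      = ∑ k ∈ Finset.range (n+1), (((-1:ℤ)^(j+k) * m.choose j * n.choose k *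
          (j+k).choose j : ℤ) : ℂ) := by
    intro j _
    rw [MeasureTheory.integral_finset_sum _ (fun k _ => (G_integrable j k).const_mul _)]
    refine Finset.sum_congr rfl fun k _ => ?_
    rw [MeasureTheory.integral_const_mul, int_G]
    have hfact : (((j+k).choose j : ℂ)) * (j.factorial : ℂ) * (k.factorial : ℂ)
        = (((j+k).factorial : ℕ) : ℂ) := by
      have h0 := Nat.choose_mul_factorial_mul_factorial (Nat.le_add_right j k)
      rw [Nat.add_sub_cancel_left] at h0
      exact_mod_cast h0
    rw [← hfact]
    have hj : (j.factorial : ℂ) ≠ 0 := Nat.cast_ne_zero.mpr (Nat.factorial_ne_zero _)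
    have hk : (k.factorial : ℂ) ≠ 0 := Nat.cast_ne_zero.mpr (Nat.factorial_ne_zero _)
    have h2 : (2:ℂ)^(j+k) ≠ 0 := pow_ne_zero _ two_ne_zero
    push_cast
    field_simp
    ring
  rw [Finset.sum_congr rfl hswap]
  have hcast : ∑ j ∈ Finset.range (m+1), ∑ k ∈ Finset.range (n+1),
      (((-1:ℤ)^(j+k) * m.choose j * n.choose k * (j+k).choose j : ℤ) : ℂ)
      = (((∑ j ∈ Finset.range (m+1), ∑ k ∈ Finset.range (n+1),
          (-1:ℤ)^(j+k) * m.choose j * n.choose k * (j+k).choose j) : ℤ) : ℂ) := by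
    push_cast
    rfl
  rw [hcast, combId]
  split_ifs <;> simp
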